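/- Suppose α2·β2 > α1·β1, β1 < α2, 1/α1 + 1/α2 < 1/β1 + 1/β2, and α2/α1 ≤ β2/β1. Set y0 = δ^((1/α1 + 1/α2)/(1/β1 + 1/β2)). Then δ < y0 < 1, and the three points w0 = (1, y0; E), w1 = (δ, δ^(−β1/α2)·y0; S), w2 = ((δ^(−β1/α2)·y0)^(−α1/β1)·δ, 1; R) satisfy g(w0) = w1, g(w1) = w2, and g(w2) = w0. In particular (1, y0; E) lies on a period-two orbit of the first-return map on Σ (a period-three orbit of g) of type E → S → R → E. -/

import Mathlib

/-- The discrete state of a cow: eating, resting (lying down), or standing. -/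
inductive CowState
  | E | R | S
deriving DecidableEq

open CowState

/-- The Poincaré map `g` of the single-cow model, acting on points
`(x, y; θ)` of the boundary of the square `[δ,1]²` together with a state label.
Powers are real powers (`Real.rpow`). -/
noncomputable def g (α1 α2 β1 β2 δ : ℝ) : ℝ × ℝ × CowState → ℝ × ℝ × CowState
  | (_x, y, .E) =>
      if δ ^ (β1 / α2) ≤ y then (y ^ (α2 / β1), 1, R)
      else (δ, δ ^ (-(β1 / α2)) * y, S)
  | (x, _y, .R) =>
      if δ ^ (α1 / β2) ≤ x then (1, x ^ (β2 / α1), E)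
      else (δ ^ (-(α1 / β2)) * x, δ, S)
  | (x, y, .S) =>
      if x = δ then
        -- on the edge `x = δ`
        (if y ≤ δ ^ (β1 / α1) then (1, δ ^ (-(β1 / α1)) * y, E)
         else (y ^ (-(α1 / β1)) * δ, 1, R))
      else
        -- on the edge `y = δ`
        (if δ ^ (α1 / β1) ≤ x then (1, x ^ (-(β1 / α1)) * δ, E)
         else (δ ^ (-(α1 / β1)) * x, 1, R))

/-- The Poincaré section `Σ = {(1,y;E) : δ ≤ y ≤ 1} ∪ {(x,1;R) : δ ≤ x < 1}`. -/
def inSigma (δ : ℝ) : ℝ × ℝ × CowState → Prop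
  | (x, y, .E) => x = 1 ∧ δ ≤ y ∧ y ≤ 1
  | (x, y, .R) => δ ≤ x ∧ x < 1 ∧ y = 1
  | (_, _, .S) => False

/-- The first-return map `f` on the Poincaré section `Σ`:
`f(w) = g(w)` if `g(w) ∈ Σ`, and `f(w) = g(g(w))` otherwise. -/
noncomputable def f (α1 α2 β1 β2 δ : ℝ) (w : ℝ × ℝ × CowState) : ℝ × ℝ × CowState := by
  classical
  exact if inSigma δ (g α1 α2 β1 β2 δ w) then g α1 α2 β1 β2 δ w
        else g α1 α2 β1 β2 δ (g α1 α2 β1 β2 δ w)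

/-- Case C: if `α2·β2 > α1·β1`, `β1 < α2`,
`1/α1 + 1/α2 < 1/β1 + 1/β2`, and `α2/α1 ≤ β2/β1`, then with
`y0 = δ^((1/α1+1/α2)/(1/β1+1/β2))` one has `δ < y0 < 1` and the three points
`w0 = (1,y0;E)`, `w1 = (δ, δ^(−β1/α2)·y0; S)`,
`w2 = ((δ^(−β1/α2)·y0)^(−α1/β1)·δ, 1; R)` form a cycle of `g`:
`g(w0) = w1`, `g(w1) = w2`, `g(w2) = w0`.  In particular `(1,y0;E)` lies on a
period-two orbit of the first-return map `f` on `Σ`. -/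
theorem period_two_orbit_case_C_exists
    (α1 α2 β1 β2 δ : ℝ)
    (hα1 : 0 < α1) (hα2 : 0 < α2) (hβ1 : 0 < β1) (hβ2 : 0 < β2)
    (hδ0 : 0 < δ) (hδ1 : δ < 1)
    (hgt : α1 * β1 < α2 * β2)
    (hba : β1 < α2)
    (hlt : 1 / α1 + 1 / α2 < 1 / β1 + 1 / β2)
    (hratio : α2 / α1 ≤ β2 / β1)
    (y0 : ℝ) (hy0 : y0 = δ ^ ((1 / α1 + 1 / α2) / (1 / β1 + 1 / β2))) :
    δ < y0 ∧ y0 < 1 ∧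
    g α1 α2 β1 β2 δ (1, y0, E) = (δ, δ ^ (-(β1 / α2)) * y0, S) ∧
    g α1 α2 β1 β2 δ (δ, δ ^ (-(β1 / α2)) * y0, S)
      = ((δ ^ (-(β1 / α2)) * y0) ^ (-(α1 / β1)) * δ, 1, R) ∧
    g α1 α2 β1 β2 δ ((δ ^ (-(β1 / α2)) * y0) ^ (-(α1 / β1)) * δ, 1, R)
      = (1, y0, E) ∧
    f α1 α2 β1 β2 δ (f α1 α2 β1 β2 δ (1, y0, E)) = (1, y0, E) := by

  classical
  have hA : (0:ℝ) < 1/α1 + 1/α2 := by positivity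
  have hB : (0:ℝ) < 1/β1 + 1/β2 := by positivity
  set e : ℝ := (1/α1 + 1/α2) / (1/β1 + 1/β2) with he
  have he0 : 0 < e := by positivity
  have he1 : e < 1 := (div_lt_one hB).2 hlt
  have hrlt : ∀ a b : ℝ, δ ^ a < δ ^ b ↔ b < a := fun a b =>
    Real.rpow_lt_rpow_left_iff_of_base_lt_one hδ0 hδ1
  have hrle : ∀ a b : ℝ, δ ^ a ≤ δ ^ b ↔ b ≤ a := fun a b =>
    Real.rpow_le_rpow_left_iff_of_base_lt_one hδ0 hδ1
  have hδy : δ < y0 := by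
    rw [hy0]
    nth_rewrite 1 [← Real.rpow_one δ]
    exact (hrlt 1 e).2 he1
  have hy1lt : y0 < 1 := by
    rw [hy0]; exact Real.rpow_lt_one hδ0.le hδ1 he0
  -- condition 1 : β1/α2 < e
  have hc1 : β1 / α2 < e := by
    rw [he, lt_div_iff₀ hB]
    have h1 : β1 / α2 * (1/β1 + 1/β2) = 1/α2 + β1/(α2*β2) := by
      field_simp
    rw [h1]
    have h2 : β1/(α2*β2) < 1/α1 := by
      rw [div_lt_div_iff₀ (by positivity) hα1]
      nlinarith
    linarith
  -- condition 2 : e - β1/α2 < β1/α1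
  have hc2 : e - β1/α2 < β1/α1 := by
    have h1 : e < β1 * (1/α1 + 1/α2) := by
      rw [he, div_lt_iff₀ hB]
      have h2 : 1 < β1 * (1/β1 + 1/β2) := by
        have : β1 * (1/β1 + 1/β2) = 1 + β1/β2 := by field_simp
        rw [this]
        have : 0 < β1/β2 := by positivity
        linarith
      nlinarith
    have h3 : β1 * (1/α1 + 1/α2) = β1/α1 + β1/α2 := by ring
    linarith [h1, h3]
  -- rewrite the intermediate points as powers of δ
  have hy1 : δ ^ (-(β1 / α2)) * y0 = δ ^ (e - β1/α2) := by
    rw [hy0, ← Real.rpow_add hδ0]; ring_nf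
  have hx2 : (δ ^ (-(β1 / α2)) * y0) ^ (-(α1 / β1)) * δ
      = δ ^ ((e - β1/α2) * (-(α1/β1)) + 1) := by
    rw [hy1, ← Real.rpow_mul hδ0.le, Real.rpow_add hδ0, Real.rpow_one]
  -- condition 3 : (e - β1/α2) * (-(α1/β1)) + 1 ≤ α1/β2
  have hc3 : (e - β1/α2) * (-(α1/β1)) + 1 ≤ α1/β2 := by
    have key : β1 * (1/α1 + 1/α2 - 1/β2) ≤ e := by
      rw [he, le_div_iff₀ hB]
      have hb1B : β1 * (1/β1 + 1/β2) = 1 + β1/β2 := by field_simp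
      have expand : β1 * (1/α1 + 1/α2 - 1/β2) * (1/β1 + 1/β2)
          = (1/α1 + 1/α2 - 1/β2) * (1 + β1/β2) := by
        rw [← hb1B]; ring
      rw [expand]
      have hu : 0 < β1/β2 := by positivity
      have h4 : (1/α1 + 1/α2) * (β1/β2) ≤ (1/β1 + 1/β2) * (β1/β2) :=
        mul_le_mul_of_nonneg_right hlt.le hu.le
      have h5 : (1/β1 + 1/β2) * (β1/β2) = (1 + β1/β2) / β2 := by
        field_simp
      have h7 : (1/α1 + 1/α2 - 1/β2) * (1 + β1/β2)
          = (1/α1 + 1/α2) + (1/α1 + 1/α2)*(β1/β2) - (1 + β1/β2)/β2 := by ring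
      linarith [expand, h7, h4, h5]
    have hexp : β1 * (1/α1 + 1/α2 - 1/β2) = β1/α1 + β1/α2 - β1/β2 := by ring
    rw [hexp] at key
    have hm := mul_le_mul_of_nonneg_right
      (show β1/α1 - β1/β2 ≤ e - β1/α2 by linarith) (div_pos hα1 hβ1).le
    have hL : (β1/α1 - β1/β2) * (α1/β1) = 1 - α1/β2 := by field_simp
    rw [hL] at hm
    nlinarith [hm]
  -- the exponent identity for the return to w0
  have hexp0 : ((e - β1/α2) * (-(α1/β1)) + 1) * (β2/α1) = e := by
    rw [he]
    field_simp
    ring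
  -- g w0 = w1
  have hg0 : g α1 α2 β1 β2 δ (1, y0, E) = (δ, δ ^ (-(β1 / α2)) * y0, S) := by
    show (if δ ^ (β1 / α2) ≤ y0 then ((y0 ^ (α2 / β1), 1, R) : ℝ × ℝ × CowState)
      else (δ, δ ^ (-(β1 / α2)) * y0, S)) = (δ, δ ^ (-(β1 / α2)) * y0, S)
    rw [if_neg]
    rw [hy0]
    exact not_le.mpr ((hrlt (e) (β1/α2)).2 hc1)
  -- g w1 = w2
  have hg1 : g α1 α2 β1 β2 δ (δ, δ ^ (-(β1 / α2)) * y0, S)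
      = ((δ ^ (-(β1 / α2)) * y0) ^ (-(α1 / β1)) * δ, 1, R) := by
    show (if (δ:ℝ) = δ then
        (if δ ^ (-(β1 / α2)) * y0 ≤ δ ^ (β1 / α1)
          then ((1, δ ^ (-(β1 / α1)) * (δ ^ (-(β1 / α2)) * y0), E) : ℝ × ℝ × CowState)
          else ((δ ^ (-(β1 / α2)) * y0) ^ (-(α1 / β1)) * δ, 1, R))
      else (if δ ^ (α1 / β1) ≤ δ
          then ((1, δ ^ (-(β1 / α1)) * δ, E) : ℝ × ℝ × CowState)
          else (δ ^ (-(α1 / β1)) * δ, 1, R)))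
      = ((δ ^ (-(β1 / α2)) * y0) ^ (-(α1 / β1)) * δ, 1, R)
    rw [if_pos rfl, if_neg]
    rw [hy1]
    exact not_le.mpr ((hrlt (β1/α1) (e - β1/α2)).2 hc2)
  -- g w2 = w0
  have hg2 : g α1 α2 β1 β2 δ ((δ ^ (-(β1 / α2)) * y0) ^ (-(α1 / β1)) * δ, 1, R)
      = (1, y0, E) := by
    show (if δ ^ (α1 / β2) ≤ (δ ^ (-(β1 / α2)) * y0) ^ (-(α1 / β1)) * δ
        then ((1, ((δ ^ (-(β1 / α2)) * y0) ^ (-(α1 / β1)) * δ) ^ (β2 / α1), E) : ℝ × ℝ × CowState)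
        else (δ ^ (-(α1 / β2)) * ((δ ^ (-(β1 / α2)) * y0) ^ (-(α1 / β1)) * δ), δ, S))
      = (1, y0, E)
    rw [if_pos]
    · have : ((δ ^ (-(β1 / α2)) * y0) ^ (-(α1 / β1)) * δ) ^ (β2 / α1) = y0 := by
        rw [hx2, ← Real.rpow_mul hδ0.le, hexp0, hy0]
      rw [this]
    · rw [hx2]
      exact (hrle (α1/β2) _).2 hc3
  refine ⟨hδy, hy1lt, hg0, hg1, hg2, ?_⟩
  -- the first-return map part
  have hf0 : f α1 α2 β1 β2 δ (1, y0, E)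
      = ((δ ^ (-(β1 / α2)) * y0) ^ (-(α1 / β1)) * δ, 1, R) := by
    unfold f
    rw [hg0,
      if_neg (show ¬ inSigma δ (δ, δ ^ (-(β1 / α2)) * y0, S) from fun h => h), hg1]
  rw [hf0]
  unfold f
  rw [hg2, if_pos (show inSigma δ (1, y0, E) from ⟨rfl, hδy.le, hy1lt.le⟩)]
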